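/- arXiv:2403.13165 — 8 statements merged into one kernel-verified Lean document; each statement's English description precedes it below -/
import Mathlib

section
/- There exists a pair of set-system hypergraphs G and H such that there is a hypergraph homomorphism from G to H, but there is no graph homomorphism from the clique-replacement graph Γ(G) to Γ(H). Consequently, no functor M from the category of set-system hypergraphs to the category of simple graphs satisfies M(G) = Γ(G) on objects. -/
/-- A set-system hypergraph: edge set, vertex set, and endpoint assignment. -/
structure SSHyp : Type 1 where
  E : Type
  V : Type
  eps : E → Set V

/-- A traditional set-system hypergraph homomorphism. -/
structure TradHom (G H : SSHyp) where
  fe : G.E → H.E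
  fv : G.V → H.V
  comm : ∀ e, H.eps (fe e) = fv '' G.eps e

def TradHom.idH (G : SSHyp) : TradHom G G :=
  ⟨id, id, fun e => (Set.image_id _).symm⟩

def TradHom.comp {G H K : SSHyp} (φ : TradHom G H) (ψ : TradHom H K) : TradHom G K :=
  ⟨ψ.fe ∘ φ.fe, ψ.fv ∘ φ.fv, fun e => by
    rw [Function.comp_apply, ψ.comm, φ.comm, Set.image_comp]⟩

/-- A set system: vertex set with a family of subsets as edges. -/
structure SetSys : Type 1 where
  V : Type
  edges : Set (Set V)

/-- A set-system (graph) homomorphism: vertex map sending edges to edges. -/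
def IsSSHom (G H : SetSys) (f : G.V → H.V) : Prop :=
  ∀ A ∈ G.edges, f '' A ∈ H.edges

/-- The clique-replacement graph Γ(G). -/
def clique (G : SSHyp) : SetSys :=
  ⟨G.V, {A | ∃ v w e, v ≠ w ∧ A = {v, w} ∧ v ∈ G.eps e ∧ w ∈ G.eps e}⟩


/-!
An edge of `Γ(H)` has two distinct endpoints, so a graph homomorphism `Γ(G) → Γ(H)` must separate
any two vertices lying in a common hyperedge of `G`. For the triangle `G` (one hyperedge on three
vertices) this forces an injection of three vertices into the two vertices of `H`, whereas a
hypergraph homomorphism may collapse two vertices of the triangle, since it only has to map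
hyperedges onto hyperedges.
-/

abbrev SSHyp.simplex (V : Type) : SSHyp := ⟨Unit, V, fun _ => Set.univ⟩

def TradHom.ofSurjective {V W : Type} (g : V → W) (hg : Function.Surjective g) :
    TradHom (SSHyp.simplex V) (SSHyp.simplex W) :=
  ⟨id, g, fun _ => (Set.image_univ_of_surjective hg).symm⟩

lemma pair_mem_clique_edges {G : SSHyp} {v w : G.V} {e : G.E} (hvw : v ≠ w)
    (hv : v ∈ G.eps e) (hw : w ∈ G.eps e) : ({v, w} : Set G.V) ∈ (clique G).edges :=
  ⟨v, w, e, hvw, rfl, hv, hw⟩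

lemma IsSSHom.map_ne_of_mem_eps {G H : SSHyp} {f : G.V → H.V}
    (hf : IsSSHom (clique G) (clique H) f) {v w : G.V} {e : G.E} (hvw : v ≠ w)
    (hv : v ∈ G.eps e) (hw : w ∈ G.eps e) : f v ≠ f w := by
  intro hfvw
  obtain ⟨a, b, -, hab, himage, -, -⟩ := hf _ (pair_mem_clique_edges hvw hv hw)
  have hsingleton : ({a, b} : Set H.V) = {f w} := by
    rw [← himage]
    exact (Set.image_pair f v w).trans (by rw [hfvw, Set.pair_eq_singleton])
  have ha : a = f w := hsingleton.subset (Set.mem_insert a {b})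
  have hb : b = f w := hsingleton.subset (Set.mem_insert_of_mem a rfl)
  exact hab (ha.trans hb.symm)

lemma IsSSHom.injective_of_simplex {V : Type} {H : SSHyp} {f : V → H.V}
    (hf : IsSSHom (clique (SSHyp.simplex V)) (clique H) f) : Function.Injective f := by
  intro v w hfvw
  by_contra hvw
  exact hf.map_ne_of_mem_eps (e := ()) hvw (Set.mem_univ v) (Set.mem_univ w) hfvw

lemma not_isSSHom_clique_simplex_of_card_lt {V : Type} [Fintype V] {H : SSHyp} [Fintype H.V]
    (hcard : Fintype.card H.V < Fintype.card V) :
    ¬ ∃ f : V → H.V, IsSSHom (clique (SSHyp.simplex V)) (clique H) f := by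
  rintro ⟨f, hf⟩
  exact (Fintype.card_le_of_injective f hf.injective_of_simplex).not_gt hcard

/-- There are set-system hypergraphs `G`, `H` with a homomorphism `G → H` but no graph
homomorphism `Γ(G) → Γ(H)`; consequently no functor `M : H → Gra` satisfies
`M(G) = Γ(G)` on objects. -/
theorem clique_replacement_not_functorial :
    (∃ G H : SSHyp, Nonempty (TradHom G H) ∧
      ¬ ∃ f : (clique G).V → (clique H).V, IsSSHom (clique G) (clique H) f) ∧
    ¬ ∃ M : ∀ G H : SSHyp, TradHom G H →
        {f : (clique G).V → (clique H).V // IsSSHom (clique G) (clique H) f},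
      (∀ G : SSHyp, (M G G (TradHom.idH G)).val = id) ∧
      (∀ (G H K : SSHyp) (φ : TradHom G H) (ψ : TradHom H K),
        (M G K (φ.comp ψ)).val = (M H K ψ).val ∘ (M G H φ).val) := by
  let collapse : TradHom (SSHyp.simplex (Fin 3)) (SSHyp.simplex (Fin 2)) :=
    TradHom.ofSurjective _ (Fin.predAbove_surjective 0)
  have no_graph_hom :=
    not_isSSHom_clique_simplex_of_card_lt (V := Fin 3) (H := SSHyp.simplex (Fin 2)) (by simp)
  refine ⟨⟨_, _, ⟨collapse⟩, no_graph_hom⟩, ?_⟩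
  rintro ⟨M, -, -⟩
  exact no_graph_hom ⟨_, (M _ _ collapse).property⟩
end

section
/- There exists a pair of set-system hypergraphs G and H such that there is a hypergraph homomorphism from G to H, but there is no graph homomorphism from the intersection graph L(G) to L(H). Consequently, no functor M from the category of set-system hypergraphs to the category of simple graphs satisfies M(G) = L(G) on objects. -/
/-- The intersection graph L(G): vertices are edges of `G`, with `{e,f}` an edge for
distinct `e, f` whose endpoint sets overlap. -/
def interGraph (G : SSHyp) : SetSys :=
  ⟨G.E, {A | ∃ e f, e ≠ f ∧ A = {e, f} ∧ (G.eps e ∩ G.eps f).Nonempty}⟩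

/-! Two loops at a single vertex map onto one loop. The two loops meet, so `L` of the source has
an edge, while `L` of a hypergraph with a single edge has none, so no map between the intersection
graphs preserves edges. A functor `M` with `M(G) = L(G)` would have to send the collapsing
homomorphism to such a map. -/

lemma interGraph_edges_eq_empty (H : SSHyp) [Subsingleton H.E] : (interGraph H).edges = ∅ :=
  Set.eq_empty_of_forall_notMem fun _ ⟨e, f, hef, _⟩ => hef (Subsingleton.elim e f)

lemma IsSSHom.edges_nonempty {G H : SetSys} {f : G.V → H.V} (hf : IsSSHom G H f)
    (hG : G.edges.Nonempty) : H.edges.Nonempty :=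
  let ⟨A, hA⟩ := hG
  ⟨f '' A, hf A hA⟩

namespace SSHyp

def twoLoops : SSHyp := ⟨Bool, Unit, fun _ => Set.univ⟩

def oneLoop : SSHyp := ⟨Unit, Unit, fun _ => Set.univ⟩

instance : Subsingleton oneLoop.E := inferInstanceAs (Subsingleton Unit)

lemma interGraph_twoLoops_edges_nonempty : (interGraph twoLoops).edges.Nonempty :=
  ⟨{false, true}, false, true, Bool.false_ne_true, rfl, ⟨(), trivial, trivial⟩⟩

def collapse : TradHom twoLoops oneLoop :=
  ⟨fun _ => (), id, fun _ => (Set.image_id _).symm⟩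

lemma not_exists_isSSHom_interGraph_twoLoops_oneLoop :
    ¬ ∃ f : (interGraph twoLoops).V → (interGraph oneLoop).V,
      IsSSHom (interGraph twoLoops) (interGraph oneLoop) f := fun ⟨_, hf⟩ =>
  (hf.edges_nonempty interGraph_twoLoops_edges_nonempty).ne_empty (interGraph_edges_eq_empty oneLoop)

end SSHyp

/-- There are set-system hypergraphs `G`, `H` with a homomorphism `G → H` but no graph
homomorphism `L(G) → L(H)`; consequently no functor `M : H → Gra` satisfies
`M(G) = L(G)` on objects. -/
theorem intersection_graph_not_functorial :
    (∃ G H : SSHyp, Nonempty (TradHom G H) ∧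
      ¬ ∃ f : (interGraph G).V → (interGraph H).V, IsSSHom (interGraph G) (interGraph H) f) ∧
    ¬ ∃ M : ∀ G H : SSHyp, TradHom G H →
        {f : (interGraph G).V → (interGraph H).V // IsSSHom (interGraph G) (interGraph H) f},
      (∀ G : SSHyp, (M G G (TradHom.idH G)).val = id) ∧
      (∀ (G H K : SSHyp) (φ : TradHom G H) (ψ : TradHom H K),
        (M G K (φ.comp ψ)).val = (M H K ψ).val ∘ (M G H φ).val) := by
  have hL := SSHyp.not_exists_isSSHom_interGraph_twoLoops_oneLoop
  refine ⟨⟨_, _, ⟨SSHyp.collapse⟩, hL⟩, ?_⟩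
  rintro ⟨M, -, -⟩
  exact hL ⟨_, (M _ _ SSHyp.collapse).prop⟩
end

section
/- There exists a pair of set-system hypergraphs G and H such that there is a hypergraph homomorphism from G to H, but there is no hypergraph homomorphism from the dual hypergraph d(G) to d(H). Consequently, no endofunctor M of the category of set-system hypergraphs satisfies M(G) = d(G) on objects. -/
/-- The dual hypergraph d(G): vertices and edges interchanged, with
`ε_{d(G)}(v) = {e : v ∈ ε_G(e)}`. -/
def dualHyp (G : SSHyp) : SSHyp :=
  ⟨G.V, G.E, fun v => {e | v ∈ G.eps e}⟩


abbrev myG : SSHyp := ⟨Fin 2, Fin 3, fun e => if e = 0 then {0, 2} else {1, 2}⟩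
abbrev myH : SSHyp := ⟨Fin 2, Fin 2, fun _ => Set.univ⟩

def myHom : TradHom myG myH where
  fe := id
  fv := fun v => if v = 2 then 1 else 0
  comm := by
    intro e
    symm
    rw [Set.eq_univ_iff_forall]
    intro y
    fin_cases y <;> fin_cases e
    · exact ⟨0, by simp, by simp⟩
    · exact ⟨1, by simp, by simp⟩
    · exact ⟨2, by simp, by simp⟩
    · exact ⟨2, by simp, by simp⟩

abbrev dG : SSHyp := ⟨Fin 3, Fin 2, fun v => {e | v ∈ myG.eps e}⟩
abbrev dH : SSHyp := ⟨Fin 2, Fin 2, fun v => {e | v ∈ myH.eps e}⟩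

lemma noDualHom' : ¬ Nonempty (TradHom dG dH) := by
  rintro ⟨φ⟩
  have h := φ.comm (0 : Fin 3)
  have h0 := Set.ext_iff.mp h (0 : Fin 2)
  have h1 := Set.ext_iff.mp h (1 : Fin 2)
  simp only [Set.mem_setOf_eq, Set.mem_univ, true_iff, Set.mem_image] at h0 h1
  obtain ⟨x, hx, hx0⟩ := h0
  obtain ⟨y, hy, hy1⟩ := h1
  have hx' : x = 0 := by revert hx; fin_cases x <;> simp
  have hy' : y = 0 := by revert hy; fin_cases y <;> simp
  rw [hx'] at hx0; rw [hy'] at hy1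
  exact absurd (hx0.symm.trans hy1) (by decide)

lemma noDualHom : ¬ Nonempty (TradHom (dualHyp myG) (dualHyp myH)) := by
  rintro ⟨φ⟩
  exact noDualHom' ⟨(φ : TradHom dG dH)⟩

/-- There are set-system hypergraphs `G`, `H` with a homomorphism `G → H` but no
hypergraph homomorphism `d(G) → d(H)`; consequently no endofunctor `M` of the category
of set-system hypergraphs satisfies `M(G) = d(G)` on objects. -/
theorem dual_hypergraph_not_functorial :
    (∃ G H : SSHyp, Nonempty (TradHom G H) ∧ ¬ Nonempty (TradHom (dualHyp G) (dualHyp H))) ∧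
    ¬ ∃ M : ∀ G H : SSHyp, TradHom G H → TradHom (dualHyp G) (dualHyp H),
      (∀ G : SSHyp, M G G (TradHom.idH G) = TradHom.idH (dualHyp G)) ∧
      (∀ (G H K : SSHyp) (φ : TradHom G H) (ψ : TradHom H K),
        M G K (φ.comp ψ) = (M G H φ).comp (M H K ψ)) := by
  refine ⟨⟨myG, myH, ⟨myHom⟩, noDualHom⟩, ?_⟩
  rintro ⟨M, -, -⟩
  exact noDualHom ⟨M myG myH myHom⟩
end

section
/- The inclusion functor N : H → H⁺ from set-system hypergraphs with traditional homomorphisms into set-system hypergraphs with weak homomorphisms admits a right adjoint given by simplicial replacement: for every set-system hypergraph G and every weak homomorphism φ from N(H) to G, there is a unique traditional homomorphism φ̂ : H → N★(G) such that θ_G ∘ N(φ̂) = φ. -/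
/-- A weak set-system hypergraph homomorphism. -/
structure WeakHom (G H : SSHyp) where
  fe : G.E → H.E
  fv : G.V → H.V
  sub : ∀ e, fv '' G.eps e ⊆ H.eps (fe e)

/-- Every traditional homomorphism is a weak homomorphism (the inclusion `N : H → H⁺`). -/
def TradHom.toWeak {G H : SSHyp} (φ : TradHom G H) : WeakHom G H :=
  ⟨φ.fe, φ.fv, fun e => le_of_eq (φ.comm e).symm⟩

/-- Componentwise composition of weak homomorphisms. -/
def WeakHom.comp {G H K : SSHyp} (φ : WeakHom G H) (ψ : WeakHom H K) : WeakHom G K :=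
  ⟨ψ.fe ∘ φ.fe, ψ.fv ∘ φ.fv, fun e => by
    rw [Set.image_comp]
    exact Set.Subset.trans (Set.image_mono (φ.sub e)) (ψ.sub (φ.fe e))⟩

/-- Simplicial replacement N★(G): same vertices, edges `(e, A)` with `A ⊆ ε_G(e)`,
and `ε(e,A) = A`. -/
def Nstar (G : SSHyp) : SSHyp :=
  ⟨{p : G.E × Set G.V // p.2 ⊆ G.eps p.1}, G.V, fun p => p.val.2⟩

/-- The counit `θ_G : N(N★(G)) → G`: identity on vertices, `(e,A) ↦ e` on edges. -/
def theta (G : SSHyp) : WeakHom (Nstar G) G :=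
  ⟨fun p => p.val.1, id, fun p => by rintro _ ⟨x, hx, rfl⟩; exact p.property hx⟩

theorem TradHom.ext {G H : SSHyp} {φ ψ : TradHom G H} (he : φ.fe = ψ.fe) (hv : φ.fv = ψ.fv) :
    φ = ψ := by
  cases φ; cases ψ; congr

/-- The transpose `φ̂` of `φ` under the adjunction. -/
def WeakHom.toNstar {G H : SSHyp} (φ : WeakHom H G) : TradHom H (Nstar G) :=
  ⟨fun e => ⟨(φ.fe e, φ.fv '' H.eps e), φ.sub e⟩, φ.fv, fun _ => rfl⟩

theorem WeakHom.toNstar_toWeak_comp_theta {G H : SSHyp} (φ : WeakHom H G) :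
    φ.toNstar.toWeak.comp (theta G) = φ :=
  rfl

/-- Since `θ_G` is the identity on vertices, `ψ` and `φ` agree on vertices; then a traditional
homomorphism into `N★(G)` must send `e` to an edge whose vertex set is `φ '' ε_H(e)`. -/
theorem TradHom.eq_toNstar_of_toWeak_comp_theta {G H : SSHyp} {ψ : TradHom H (Nstar G)}
    {φ : WeakHom H G} (h : ψ.toWeak.comp (theta G) = φ) : ψ = φ.toNstar := by
  subst h
  exact TradHom.ext (funext fun e => Subtype.ext (Prod.ext rfl (ψ.comm e))) rfl

/-- Simplicial replacement is right adjoint to the inclusion `N : H → H⁺`: every weak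
homomorphism `φ : N(H) → G` factors uniquely through `θ_G` by a traditional
homomorphism `φ̂ : H → N★(G)`. -/
theorem simplicial_replacement_right_adjoint (G H : SSHyp) (φ : WeakHom H G) :
    ∃! φh : TradHom H (Nstar G), φh.toWeak.comp (theta G) = φ :=
  ⟨φ.toNstar, φ.toNstar_toWeak_comp_theta, fun _ => TradHom.eq_toNstar_of_toWeak_comp_theta⟩
end

section
/- The associated incidence hypergraph functor Ǔ from quivers to incidence hypergraphs admits a right adjoint R⃗ (directed clique replacement): for every quiver Q, incidence hypergraph G, and incidence hypergraph homomorphism φ : Ǔ(Q) → G, there is a unique quiver homomorphism φ̂ : Q → R⃗(G) with θ̌_G ∘ Ǔ(φ̂) = φ. -/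
/-- A quiver: vertex set, edge set, source and target maps. -/
structure Quiv : Type 1 where
  V : Type
  E : Type
  s : E → V
  t : E → V

/-- A quiver homomorphism. -/
structure QuivHom (Q Q' : Quiv) where
  fv : Q.V → Q'.V
  fe : Q.E → Q'.E
  hs : ∀ e, Q'.s (fe e) = fv (Q.s e)
  ht : ∀ e, Q'.t (fe e) = fv (Q.t e)

/-- An incidence hypergraph: vertices, edges, incidences, port and attachment maps. -/
structure IncHyp : Type 1 where
  V : Type
  E : Type
  I : Type
  port : I → V
  att : I → E

/-- An incidence hypergraph homomorphism. -/
structure IncHom (G G' : IncHyp) where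
  fv : G.V → G'.V
  fe : G.E → G'.E
  fi : G.I → G'.I
  hport : ∀ i, G'.port (fi i) = fv (G.port i)
  hatt : ∀ i, G'.att (fi i) = fe (G.att i)

/-- Composition of incidence hypergraph homomorphisms. -/
def IncHom.comp {G H K : IncHyp} (φ : IncHom G H) (ψ : IncHom H K) : IncHom G K :=
  ⟨ψ.fv ∘ φ.fv, ψ.fe ∘ φ.fe, ψ.fi ∘ φ.fi,
    fun i => by simp [ψ.hport, φ.hport],
    fun i => by simp [ψ.hatt, φ.hatt]⟩

/-- The associated incidence hypergraph Ǔ(Q) of a quiver: incidences `{0,1} × E`,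
where `0` ports to the source and `1` ports to the target. -/
def Ucheck (Q : Quiv) : IncHyp :=
  ⟨Q.V, Q.E, Bool × Q.E, fun j => if j.1 then Q.t j.2 else Q.s j.2, fun j => j.2⟩

/-- The action of Ǔ on quiver homomorphisms. -/
def UcheckHom {Q Q' : Quiv} (φ : QuivHom Q Q') : IncHom (Ucheck Q) (Ucheck Q') :=
  ⟨φ.fv, φ.fe, fun j => (j.1, φ.fe j.2),
    fun j => by rcases j with ⟨b, e⟩; cases b <;> simp [Ucheck, φ.hs, φ.ht],
    fun j => rfl⟩

/-- The directed clique replacement quiver R⃗(G): arcs are pairs of incidences lying in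
a common edge, with source and target the respective ports. -/
def Rvec (G : IncHyp) : Quiv :=
  ⟨G.V, {p : G.I × G.I // G.att p.1 = G.att p.2},
    fun p => G.port p.val.1, fun p => G.port p.val.2⟩

/-- The counit `θ̌_G : Ǔ(R⃗(G)) → G`. -/
def thetaCheck (G : IncHyp) : IncHom (Ucheck (Rvec G)) G :=
  ⟨id, fun p => G.att p.val.1,
    fun j => if j.1 then j.2.val.2 else j.2.val.1,
    fun j => by rcases j with ⟨b, p⟩; cases b <;> rfl,
    fun j => by rcases j with ⟨b, p⟩; cases b <;> simp [Ucheck] <;> exact p.property.symm⟩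

/-! The transpose `φ̂` of `φ : Ǔ(Q) → G` sends an edge `e` to the arc formed by the images of
its two incidences `(0, e)` and `(1, e)`, which lie in the common edge `φ(e)`. Conversely an arc
of `R⃗(G)` is determined by its two incidences, which is why `θ̌_G ∘ Ǔ(-)` is injective. -/

@[ext]
lemma QuivHom.ext {Q Q' : Quiv} {f g : QuivHom Q Q'} (hv : f.fv = g.fv) (he : f.fe = g.fe) :
    f = g := by
  cases f; cases g; cases hv; cases he; rfl

@[ext]
lemma IncHom.ext {G G' : IncHyp} {f g : IncHom G G'} (hv : f.fv = g.fv) (he : f.fe = g.fe)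
    (hi : f.fi = g.fi) : f = g := by
  cases f; cases g; cases hv; cases he; cases hi; rfl

lemma UcheckHom_comp_thetaCheck_injective (Q : Quiv) (G : IncHyp) :
    Function.Injective fun ψ : QuivHom Q (Rvec G) => (UcheckHom ψ).comp (thetaCheck G) := by
  intro ψ ψ' h
  have hi := congrArg IncHom.fi h
  refine QuivHom.ext (congrArg IncHom.fv h) (funext fun e => Subtype.ext (Prod.ext ?_ ?_))
  · exact congrFun hi (false, e)
  · exact congrFun hi (true, e)

def IncHom.transpose {Q : Quiv} {G : IncHyp} (φ : IncHom (Ucheck Q) G) : QuivHom Q (Rvec G) where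
  fv := φ.fv
  fe e := ⟨(φ.fi (false, e), φ.fi (true, e)), (φ.hatt (false, e)).trans (φ.hatt (true, e)).symm⟩
  hs e := φ.hport (false, e)
  ht e := φ.hport (true, e)

lemma UcheckHom_transpose_comp_thetaCheck {Q : Quiv} {G : IncHyp} (φ : IncHom (Ucheck Q) G) :
    (UcheckHom φ.transpose).comp (thetaCheck G) = φ := by
  ext x
  · rfl
  · exact φ.hatt (false, x)
  · obtain ⟨_ | _, _⟩ := x <;> rfl

/-- The associated incidence hypergraph functor Ǔ admits the directed clique
replacement R⃗ as a right adjoint: every incidence hypergraph homomorphism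
`φ : Ǔ(Q) → G` factors uniquely through `θ̌_G` by a quiver homomorphism
`φ̂ : Q → R⃗(G)`. -/
theorem directed_clique_replacement_right_adjoint (Q : Quiv) (G : IncHyp)
    (φ : IncHom (Ucheck Q) G) :
    ∃! φh : QuivHom Q (Rvec G), (UcheckHom φh).comp (thetaCheck G) = φ :=
  ⟨φ.transpose, UcheckHom_transpose_comp_thetaCheck φ, fun _ h =>
    UcheckHom_comp_thetaCheck_injective Q G (h.trans (UcheckHom_transpose_comp_thetaCheck φ).symm)⟩
end

section
/- The hexagon commutes: for the functor Ǔ from quivers to incidence hypergraphs followed by simplification S_R to incidence structures, and the underlying multigraph functor U followed by the inclusions into H, into H⁺, and the isomorphism C to incidence structures, one has S_R ∘ Ǔ = C ∘ N_{H⁺} ∘ N_H ∘ U as functors from quivers to incidence structures. -/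
/-- An incidence structure. -/
structure IStr : Type 1 where
  V : Type
  E : Type
  I : Set (V × E)

/-- `S_R`: simplification of an incidence hypergraph to an incidence structure. -/
def SR (G : IncHyp) : IStr :=
  ⟨G.V, G.E, {p | ∃ j, (G.port j, G.att j) = p}⟩

/-- The action of `S_R` on homomorphisms: the pair of vertex and edge functions. -/
def SRhom {G G' : IncHyp} (ψ : IncHom G G') : (G.V → G'.V) × (G.E → G'.E) :=
  (ψ.fv, ψ.fe)

/-- `U`: the underlying multigraph (set-system hypergraph) of a quiver. -/
def Umult (Q : Quiv) : SSHyp :=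
  ⟨Q.E, Q.V, fun e => {Q.s e, Q.t e}⟩

/-- The action of `U` on quiver homomorphisms (a traditional multigraph
homomorphism; the inclusions `N_H`, `N_{H⁺}` leave it unchanged). -/
def UmultHom {Q Q' : Quiv} (φ : QuivHom Q Q') : TradHom (Umult Q) (Umult Q') :=
  ⟨φ.fe, φ.fv, fun (e : Q.E) => by
    show ({Q'.s (φ.fe e), Q'.t (φ.fe e)} : Set Q'.V) = φ.fv '' {Q.s e, Q.t e}
    rw [φ.hs, φ.ht, Set.image_insert_eq, Set.image_singleton]⟩

/-- `C`: the incidence structure of a set-system hypergraph. -/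
def Cmap (G : SSHyp) : IStr :=
  ⟨G.V, G.E, {p | p.1 ∈ G.eps p.2}⟩

/-- The action of `C` on homomorphisms: the pair of vertex and edge functions. -/
def Chom {G H : SSHyp} (φ : TradHom G H) : (G.V → H.V) × (G.E → H.E) :=
  (φ.fv, φ.fe)

theorem mem_SR_Ucheck_iff {Q : Quiv} {v : Q.V} {e : Q.E} :
    (v, e) ∈ (SR (Ucheck Q)).I ↔ v = Q.s e ∨ v = Q.t e := by
  constructor
  · rintro ⟨⟨_ | _, e⟩, h⟩ <;> obtain ⟨rfl, rfl⟩ := Prod.mk.inj h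
    exacts [Or.inl rfl, Or.inr rfl]
  · rintro (rfl | rfl)
    exacts [⟨(false, e), rfl⟩, ⟨(true, e), rfl⟩]

theorem SR_Ucheck_I (Q : Quiv) : (SR (Ucheck Q)).I = (Cmap (Umult Q)).I :=
  Set.ext fun ⟨_, _⟩ => mem_SR_Ucheck_iff

/-- The hexagon commutes: `S_R ∘ Ǔ = C ∘ N_{H⁺} ∘ N_H ∘ U` as functors from quivers to
incidence structures, both on objects and on homomorphisms. -/
theorem hexagon_commutes :
    (∀ Q : Quiv, SR (Ucheck Q) = Cmap (Umult Q)) ∧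
    (∀ (Q Q' : Quiv) (φ : QuivHom Q Q'), SRhom (UcheckHom φ) = Chom (UmultHom φ)) :=
  ⟨fun Q => congrArg (IStr.mk Q.V Q.E) (SR_Ucheck_I Q), fun _ _ _ => rfl⟩
end

section
/- The factored clique-replacement functor R := S_M ∘ del ∘ N★ ∘ N_{H⁺} from set-system hypergraphs to simple graphs acts as follows: VR(G) = V(G), ER(G) = {{v,w} : there exists e ∈ E(G) with {v,w} ⊆ ε_G(e)}, and R(φ) = V(φ) on homomorphisms. -/
/-- The action of `N★` on weak homomorphisms (yielding traditional homomorphisms). -/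
def NstarHom {G H : SSHyp} (φ : WeakHom G H) : TradHom (Nstar G) (Nstar H) :=
  ⟨fun p => ⟨(φ.fe p.val.1, φ.fv '' p.val.2),
      (Set.image_mono p.property).trans (φ.sub _)⟩,
    φ.fv, fun p => rfl⟩

/-- `del`: deletion of all edges not of cardinality 1 or 2. -/
def delM (M : SSHyp) : SSHyp :=
  ⟨{e : M.E // ∃ v w, M.eps e = {v, w}}, M.V, fun e => M.eps e.val⟩

/-- The action of `del` on traditional homomorphisms. -/
def delMHom {M M' : SSHyp} (ψ : TradHom M M') : TradHom (delM M) (delM M') :=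
  ⟨fun e => ⟨ψ.fe e.val, by
      obtain ⟨v, w, h⟩ := e.property
      exact ⟨ψ.fv v, ψ.fv w, by
        rw [ψ.comm, h, Set.image_insert_eq, Set.image_singleton]⟩⟩,
    ψ.fv, fun e => ψ.comm e.val⟩

/-- `S_M`: multigraph simplification to a set system (simple graph). -/
def SM (M : SSHyp) : SetSys :=
  ⟨M.V, {A | ∃ e, A = M.eps e}⟩

/-- The action of `S_M` on traditional homomorphisms. -/
def SMHom {M M' : SSHyp} (ψ : TradHom M M') :
    {f : (SM M).V → (SM M').V // IsSSHom (SM M) (SM M') f} :=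
  ⟨ψ.fv, fun A hA => by
    obtain ⟨e, rfl⟩ := hA
    exact ⟨ψ.fe e, (ψ.comm e).symm⟩⟩

/-- The factored clique replacement `R := S_M ∘ del ∘ N★ ∘ N_{H⁺}` on objects. -/
def Robj (G : SSHyp) : SetSys := SM (delM (Nstar G))

/-- The factored clique replacement on traditional homomorphisms. -/
def Rhom {G H : SSHyp} (φ : TradHom G H) :
    {f : (Robj G).V → (Robj H).V // IsSSHom (Robj G) (Robj H) f} :=
  SMHom (delMHom (NstarHom φ.toWeak))

theorem mem_SM_delM_edges_iff {M : SSHyp} {A : Set M.V} :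
    A ∈ (SM (delM M)).edges ↔ ∃ e, A = M.eps e ∧ ∃ v w, A = {v, w} := by
  constructor
  · rintro ⟨⟨e, v, w, hvw⟩, rfl⟩
    exact ⟨e, rfl, v, w, hvw⟩
  · rintro ⟨e, rfl, hvw⟩
    exact ⟨⟨e, hvw⟩, rfl⟩

theorem mem_Robj_edges_iff {G : SSHyp} {A : Set G.V} :
    A ∈ (Robj G).edges ↔ ∃ v w e, A = {v, w} ∧ v ∈ G.eps e ∧ w ∈ G.eps e := by
  refine (mem_SM_delM_edges_iff (M := Nstar G)).trans ?_
  constructor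
  · rintro ⟨⟨⟨e, B⟩, hB⟩, rfl, v, w, rfl⟩
    obtain ⟨hv, hw⟩ := Set.insert_subset_iff.mp hB
    exact ⟨v, w, e, rfl, hv, Set.singleton_subset_iff.mp hw⟩
  · rintro ⟨v, w, e, rfl, hv, hw⟩
    exact ⟨⟨⟨e, {v, w}⟩, Set.insert_subset hv (Set.singleton_subset_iff.mpr hw)⟩, rfl, v, w, rfl⟩

/-- Action of the factored clique replacement functor `R`: vertices are unchanged,
edges are the pairs `{v,w}` contained in a common edge of `G`, and the action on a
homomorphism `φ` is its vertex function `V(φ)`. -/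
theorem factored_clique_replacement_action :
    (∀ G : SSHyp, (Robj G).V = G.V) ∧
    (∀ G : SSHyp, (Robj G).edges =
      {A : Set G.V | ∃ v w e, A = {v, w} ∧ v ∈ G.eps e ∧ w ∈ G.eps e}) ∧
    (∀ (G H : SSHyp) (φ : TradHom G H), (Rhom φ).val = φ.fv) :=
  ⟨fun _ => rfl, fun _ => Set.ext fun _ => mem_Robj_edges_iff, fun _ _ _ => rfl⟩
end

section
/- The dual hypergraph operation, sending a set-system hypergraph G to G‡ with vertex set E(G), edge set V(G), ε_{G‡}(v) = {e : v ∈ ε_G(e)}, and a weak homomorphism φ to (V⁺(φ), E⁺(φ)), is a self-inverting endofunctor of the category of set-system hypergraphs with weak homomorphisms. -/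
/-- A weak set-system homomorphism (predicate form). -/
def IsWeakHom (G H : SSHyp) (fe : G.E → H.E) (fv : G.V → H.V) : Prop :=
  ∀ e, fv '' G.eps e ⊆ H.eps (fe e)

/-- The dual hypergraph `G‡`: vertices and edges interchanged, with
`ε_{G‡}(v) = {e : v ∈ ε_G(e)}`. -/
def ddag (G : SSHyp) : SSHyp :=
  ⟨G.V, G.E, fun v => {e | v ∈ G.eps e}⟩

/-- The dual hypergraph operation is a self-inverting endofunctor of the category of
set-system hypergraphs with weak homomorphisms: it is involutive on objects,
`(fe, fv)` is a weak homomorphism `G → H` exactly when `(fv, fe)` is a weak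
homomorphism `G‡ → H‡` (so the swap is functorial), and it preserves identities and
compositions componentwise. -/
theorem dual_hypergraph_self_inverting_functor :
    (∀ G : SSHyp, ddag (ddag G) = G) ∧
    (∀ (G H : SSHyp) (fe : G.E → H.E) (fv : G.V → H.V),
      IsWeakHom G H fe fv ↔ IsWeakHom (ddag G) (ddag H) fv fe) ∧
    (∀ G : SSHyp, IsWeakHom (ddag G) (ddag G) id id) ∧
    (∀ (G H K : SSHyp) (fe : G.E → H.E) (fv : G.V → H.V) (ge : H.E → K.E) (gv : H.V → K.V),
      IsWeakHom G H fe fv → IsWeakHom H K ge gv →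
        IsWeakHom (ddag G) (ddag K) (gv ∘ fv) (ge ∘ fe)) := by
  refine ⟨fun G => rfl, fun G H fe fv => ?_, fun G e => by simp, ?_⟩
  · constructor
    · rintro h v _ ⟨e, he, rfl⟩
      exact h e ⟨v, he, rfl⟩
    · rintro h e _ ⟨v, hv, rfl⟩
      exact h v ⟨e, hv, rfl⟩
  · rintro G H K fe fv ge gv h1 h2 v _ ⟨e, he, rfl⟩
    exact h2 (fe e) ⟨fv v, h1 e ⟨v, he, rfl⟩, rfl⟩
end
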